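/- An external flow (x_1, …, x_k) is realizable in a finite directed flow network G with terminals q_1, …, q_k if and only if (1) the sum of all x_i is 0, and (2) for every nonempty proper subset S of the terminals, the sum of x_i over q_i ∈ S is at most the minimum capacity of a cut separating S from its complement in the terminal set. -/

import Mathlib

open Finset

/-- Capacity of the cut determined by vertex set `A`: total capacity of edges leaving `A`. -/
def cutCap {V : Type} [Fintype V] [DecidableEq V] (c : V → V → ℝ) (A : Finset V) : ℝ :=
  ∑ u ∈ A, ∑ v ∈ Aᶜ, c u v

/-- Minimum capacity of a cut with all of `S` on the source side and all of `T` on the sink side. -/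
noncomputable def minCut {V : Type} [Fintype V] [DecidableEq V] (c : V → V → ℝ) (S T : Finset V) : ℝ :=
  sInf {x : ℝ | ∃ A : Finset V, S ⊆ A ∧ Disjoint T A ∧ x = cutCap c A}

/-- Net outflow of `f` at vertex `v`. -/
def netOut {V : Type} [Fintype V] (f : V → V → ℝ) (v : V) : ℝ :=
  (∑ w, f v w) - ∑ w, f w v

/-- `f` is an external flow in the network with capacities `c`, terminals `q` and
terminal net-outflow values `x`. -/
def IsExtFlow {V : Type} [Fintype V] {k : ℕ} (c f : V → V → ℝ) (q : Fin k → V)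
    (x : Fin k → ℝ) : Prop :=
  (∀ u v, 0 ≤ f u v ∧ f u v ≤ c u v) ∧
  (∀ v, (∀ i, q i ≠ v) → netOut f v = 0) ∧
  (∀ i, netOut f (q i) = x i)

variable {V : Type}

lemma mem_Icc_iff_forall₂ {c f : V → V → ℝ} :
    f ∈ Set.Icc 0 c ↔ ∀ u v, 0 ≤ f u v ∧ f u v ≤ c u v := by
  simp only [Set.mem_Icc, Pi.le_def, Pi.zero_apply, ← forall_and]

section Continuity

variable [Fintype V]

lemma continuous_netOut (v : V) : Continuous fun f : V → V → ℝ => netOut f v := by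
  unfold netOut; fun_prop

def imbalance (b : V → ℝ) (f : V → V → ℝ) : ℝ := ∑ v, (netOut f v - b v) ^ 2

lemma continuous_imbalance (b : V → ℝ) : Continuous (imbalance b) :=
  continuous_finsetSum _ fun v _ => ((continuous_netOut v).sub continuous_const).pow 2

end Continuity

variable [DecidableEq V]

section Terminals

variable {ι : Type} [Fintype ι]

def supply (q : ι → V) (x : ι → ℝ) (v : V) : ℝ := ∑ i, if q i = v then x i else 0

lemma supply_apply_of_injective {q : ι → V} (hq : Function.Injective q) (x : ι → ℝ) (i : ι) :
    supply q x (q i) = x i := by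
  rw [supply, sum_eq_single i (fun j _ hj => if_neg (hq.ne hj)) (by simp), if_pos rfl]

lemma supply_eq_zero {q : ι → V} (x : ι → ℝ) {v : V} (hv : ∀ i, q i ≠ v) : supply q x v = 0 :=
  sum_eq_zero fun i _ => if_neg (hv i)

lemma sum_supply_of_mem_iff {q : ι → V} (x : ι → ℝ) {A : Finset V} {S : Finset ι}
    (h : ∀ i, q i ∈ A ↔ i ∈ S) : ∑ v ∈ A, supply q x v = ∑ i ∈ S, x i := by
  simp only [supply]
  rw [sum_comm]
  simp only [sum_ite_eq]
  rw [← sum_filter]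
  exact sum_congr (by ext i; simp [h]) fun _ _ => rfl

lemma image_subset_and_disjoint_iff [DecidableEq ι] {q : ι → V} {S : Finset ι} {A : Finset V} :
    S.image q ⊆ A ∧ Disjoint (Sᶜ.image q) A ↔ ∀ i, q i ∈ A ↔ i ∈ S := by
  constructor
  · rintro ⟨hSA, hTA⟩ i
    refine ⟨fun hi => ?_, fun hi => hSA (mem_image_of_mem q hi)⟩
    by_contra hiS
    exact disjoint_left.mp hTA (mem_image_of_mem q (mem_compl.mpr hiS)) hi
  · intro h
    refine ⟨fun v hv => ?_, disjoint_left.mpr fun v hv hvA => ?_⟩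
    · obtain ⟨i, hi, rfl⟩ := mem_image.mp hv
      exact (h i).mpr hi
    · obtain ⟨i, hi, rfl⟩ := mem_image.mp hv
      exact mem_compl.mp hi ((h i).mp hvA)

end Terminals

lemma add_edge_mem_Icc {c f : V → V → ℝ} (hf : f ∈ Set.Icc 0 c) {u v : V} {δ : ℝ}
    (h₀ : 0 ≤ f u v + δ) (h₁ : f u v + δ ≤ c u v) :
    (fun a b => f a b + if a = u ∧ b = v then δ else 0) ∈ Set.Icc 0 c := by
  rw [mem_Icc_iff_forall₂] at hf ⊢
  intro a b
  split_ifs with hab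
  · rcases hab with ⟨rfl, rfl⟩; exact ⟨h₀, h₁⟩
  · simpa using hf a b

variable [Fintype V]

lemma sum_netOut (f : V → V → ℝ) (A : Finset V) :
    ∑ v ∈ A, netOut f v = ∑ u ∈ A, ∑ v ∈ Aᶜ, f u v - ∑ u ∈ A, ∑ v ∈ Aᶜ, f v u := by
  have hsplit : ∀ g : V → V → ℝ,
      ∑ u ∈ A, ∑ v, g u v = ∑ u ∈ A, ∑ v ∈ A, g u v + ∑ u ∈ A, ∑ v ∈ Aᶜ, g u v := fun g => by
    simp only [← sum_add_distrib, sum_add_sum_compl]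
  simp only [netOut, sum_sub_distrib, hsplit f, hsplit fun u v => f v u]
  rw [sum_comm (s := A) (t := A) (f := fun u v => f v u)]
  ring

lemma sum_netOut_univ (f : V → V → ℝ) : ∑ v, netOut f v = 0 := by
  simpa using sum_netOut f univ

lemma sum_netOut_le_cutCap {c f : V → V → ℝ} (hf : f ∈ Set.Icc 0 c) (A : Finset V) :
    ∑ v ∈ A, netOut f v ≤ cutCap c A := by
  rw [mem_Icc_iff_forall₂] at hf
  rw [sum_netOut, cutCap]
  have hout : ∑ u ∈ A, ∑ v ∈ Aᶜ, f u v ≤ ∑ u ∈ A, ∑ v ∈ Aᶜ, c u v :=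
    sum_le_sum fun u _ => sum_le_sum fun v _ => (hf u v).2
  have hin : 0 ≤ ∑ u ∈ A, ∑ v ∈ Aᶜ, f v u :=
    sum_nonneg fun u _ => sum_nonneg fun v _ => (hf v u).1
  linarith

lemma sum_netOut_eq_cutCap {c f : V → V → ℝ} {A : Finset V}
    (hA : ∀ u ∈ A, ∀ v ∉ A, f u v = c u v ∧ f v u = 0) :
    ∑ v ∈ A, netOut f v = cutCap c A := by
  rw [sum_netOut, cutCap, sum_congr rfl fun u hu => sum_congr rfl fun v hv =>
      (hA u hu v (mem_compl.mp hv)).1,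
    sum_eq_zero fun u hu => sum_eq_zero fun v hv => (hA u hu v (mem_compl.mp hv)).2, sub_zero]

lemma cutCap_nonneg {c : V → V → ℝ} (hc : 0 ≤ c) (A : Finset V) : 0 ≤ cutCap c A :=
  sum_nonneg fun u _ => sum_nonneg fun v _ => hc u v

lemma minCut_le_cutCap {c : V → V → ℝ} (hc : 0 ≤ c) {S T A : Finset V} (hSA : S ⊆ A)
    (hTA : Disjoint T A) : minCut c S T ≤ cutCap c A :=
  csInf_le ⟨0, by rintro _ ⟨B, -, -, rfl⟩; exact cutCap_nonneg hc B⟩ ⟨A, hSA, hTA, rfl⟩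

lemma le_minCut {c : V → V → ℝ} {S T : Finset V} {y : ℝ}
    (hcut : ∃ A, S ⊆ A ∧ Disjoint T A)
    (hle : ∀ A, S ⊆ A → Disjoint T A → y ≤ cutCap c A) : y ≤ minCut c S T := by
  obtain ⟨A, hSA, hTA⟩ := hcut
  refine le_csInf ⟨_, A, hSA, hTA, rfl⟩ ?_
  rintro _ ⟨B, hSB, hTB, rfl⟩
  exact hle B hSB hTB

lemma netOut_add_edge (f : V → V → ℝ) (u v : V) (δ : ℝ) (w : V) :
    netOut (fun a b => f a b + if a = u ∧ b = v then δ else 0) w =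
      netOut f w + (if w = u then δ else 0) - (if w = v then δ else 0) := by
  simp only [netOut, sum_add_distrib, ite_and, sum_ite_irrel, sum_ite_eq', mem_univ, if_true,
    sum_const_zero]
  ring

lemma exists_shift_netOut {c f : V → V → ℝ} (hf : f ∈ Set.Icc 0 c) {u v : V}
    (h : f u v < c u v ∨ 0 < f v u) :
    ∃ ε > 0, ∀ δ ∈ Set.Ioc 0 ε, ∃ g ∈ Set.Icc 0 c, ∀ w,
      netOut g w = netOut f w + (if w = u then δ else 0) - (if w = v then δ else 0) := by
  rcases h with h | h
  · refine ⟨c u v - f u v, sub_pos.mpr h, fun δ ⟨hδ, hδε⟩ => ⟨_, ?_, netOut_add_edge f u v δ⟩⟩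
    exact add_edge_mem_Icc hf (by linarith [(mem_Icc_iff_forall₂.mp hf u v).1]) (by linarith)
  · refine ⟨f v u, h, fun δ ⟨hδ, hδε⟩ =>
      ⟨fun a b => f a b + if a = v ∧ b = u then -δ else 0, ?_, fun w => ?_⟩⟩
    · exact add_edge_mem_Icc hf (by linarith) (by linarith [(mem_Icc_iff_forall₂.mp hf v u).2])
    · rw [netOut_add_edge]
      split_ifs <;> ring

lemma imbalance_of_shift (b : V → ℝ) {f g : V → V → ℝ} {u v : V} (huv : u ≠ v) (δ : ℝ)
    (hg : ∀ w, netOut g w = netOut f w + (if w = u then δ else 0) - (if w = v then δ else 0)) :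
    imbalance b g =
      imbalance b f + 2 * δ * ((netOut f u - b u) - (netOut f v - b v) + δ) := by
  have key : ∀ w, (netOut g w - b w) ^ 2 = (netOut f w - b w) ^ 2
      + (if w = u then δ * (2 * (netOut f u - b u) + δ) else 0)
      + (if w = v then δ * (δ - 2 * (netOut f v - b v)) else 0) := by
    intro w
    rw [hg]
    split_ifs with hu hv <;> subst_vars <;> first | exact absurd rfl huv | ring
  simp only [imbalance, key, sum_add_distrib, sum_ite_eq', mem_univ, if_true]
  ring

lemma excess_le_of_isMinOn {b : V → ℝ} {c f : V → V → ℝ}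
    (hmin : IsMinOn (imbalance b) (Set.Icc 0 c) f) (hf : f ∈ Set.Icc 0 c) {u v : V}
    (h : f u v < c u v ∨ 0 < f v u) : netOut f v - b v ≤ netOut f u - b u := by
  by_contra! hlt
  have huv : u ≠ v := by rintro rfl; exact lt_irrefl _ hlt
  obtain ⟨ε, hε, hshift⟩ := exists_shift_netOut hf h
  set δ := min ε ((netOut f v - b v - (netOut f u - b u)) / 2)
  have hδ : 0 < δ := lt_min hε (by linarith)
  obtain ⟨g, hg, hgf⟩ := hshift δ ⟨hδ, min_le_left _ _⟩
  have hdecrease : (netOut f u - b u) - (netOut f v - b v) + δ < 0 := by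
    linarith [min_le_right ε ((netOut f v - b v - (netOut f u - b u)) / 2)]
  have hle := isMinOn_iff.mp hmin g hg
  rw [imbalance_of_shift b huv δ hgf] at hle
  nlinarith

theorem exists_flow_iff {c : V → V → ℝ} (hc : 0 ≤ c) (b : V → ℝ) :
    (∃ f ∈ Set.Icc 0 c, netOut f = b) ↔
      ∑ v, b v = 0 ∧ ∀ A : Finset V, ∑ v ∈ A, b v ≤ cutCap c A := by
  constructor
  · rintro ⟨f, hf, rfl⟩
    exact ⟨sum_netOut_univ f, sum_netOut_le_cutCap hf⟩
  rintro ⟨hb, hcut⟩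
  obtain ⟨f, hf, hmin⟩ := isCompact_Icc.exists_isMinOn ⟨0, le_rfl, hc⟩
    (continuous_imbalance b).continuousOn
  have hexcess_nonneg : ∀ v, 0 ≤ netOut f v - b v := by
    by_contra! ⟨w, hw⟩
    set R := univ.filter fun v => netOut f v - b v < 0
    have hsaturated : ∀ u ∈ R, ∀ v ∉ R, f u v = c u v ∧ f v u = 0 := by
      intro u hu v hv
      have hres : ¬(f u v < c u v ∨ 0 < f v u) := fun h => hv <| mem_filter.mpr
        ⟨mem_univ v, (excess_le_of_isMinOn hmin hf h).trans_lt (mem_filter.mp hu).2⟩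
      simp only [not_or, not_lt] at hres
      rw [mem_Icc_iff_forall₂] at hf
      exact ⟨le_antisymm (hf u v).2 hres.1, le_antisymm hres.2 (hf v u).1⟩
    have hneg : ∑ v ∈ R, (netOut f v - b v) < 0 :=
      sum_neg (fun v hv => (mem_filter.mp hv).2) ⟨w, mem_filter.mpr ⟨mem_univ w, hw⟩⟩
    rw [sum_sub_distrib, sum_netOut_eq_cutCap hsaturated] at hneg
    linarith [hcut R]
  have hexcess_sum : ∑ v, (netOut f v - b v) = 0 := by
    rw [sum_sub_distrib, sum_netOut_univ, hb, sub_zero]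
  refine ⟨f, hf, funext fun v => ?_⟩
  have := (sum_eq_zero_iff_of_nonneg fun v _ => hexcess_nonneg v).mp hexcess_sum v (mem_univ v)
  linarith

lemma isExtFlow_iff {k : ℕ} {c f : V → V → ℝ} {q : Fin k → V} (hq : Function.Injective q)
    (x : Fin k → ℝ) : IsExtFlow c f q x ↔ f ∈ Set.Icc 0 c ∧ netOut f = supply q x := by
  rw [mem_Icc_iff_forall₂]
  constructor
  · rintro ⟨hf, hcons, hterm⟩
    refine ⟨hf, funext fun v => ?_⟩
    by_cases hv : ∃ i, q i = v
    · obtain ⟨i, rfl⟩ := hv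
      rw [hterm, supply_apply_of_injective hq]
    · rw [not_exists] at hv
      rw [hcons v hv, supply_eq_zero x hv]
  · rintro ⟨hf, hnet⟩
    refine ⟨hf, fun v hv => ?_, fun i => ?_⟩
    · rw [hnet, supply_eq_zero x hv]
    · rw [hnet, supply_apply_of_injective hq]

lemma forall_le_minCut_iff {k : ℕ} {c : V → V → ℝ} (hc : 0 ≤ c) {q : Fin k → V}
    (hq : Function.Injective q) {x : Fin k → ℝ} (hx : ∑ i, x i = 0) :
    (∀ S : Finset (Fin k), S.Nonempty → S ≠ univ →
        ∑ i ∈ S, x i ≤ minCut c (S.image q) (Sᶜ.image q)) ↔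
      ∀ A : Finset V, ∑ v ∈ A, supply q x v ≤ cutCap c A := by
  constructor
  · intro hS A
    set S := univ.filter fun i => q i ∈ A
    have hmem : ∀ i, q i ∈ A ↔ i ∈ S := by simp [S]
    obtain ⟨hSA, hTA⟩ := image_subset_and_disjoint_iff.mpr hmem
    rw [sum_supply_of_mem_iff x hmem]
    rcases S.eq_empty_or_nonempty with hempty | hne
    · simpa [hempty] using cutCap_nonneg hc A
    by_cases huniv : S = univ
    · simpa [huniv, hx] using cutCap_nonneg hc A
    exact (hS S hne huniv).trans (minCut_le_cutCap hc hSA hTA)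
  · intro hA S _ _
    refine le_minCut ⟨S.image q, subset_rfl, (disjoint_image hq).mpr disjoint_compl_left⟩ ?_
    intro A hSA hTA
    rw [← sum_supply_of_mem_iff x (image_subset_and_disjoint_iff.mp ⟨hSA, hTA⟩)]
    exact hA A

theorem stmt3 {V : Type} [Fintype V] [DecidableEq V] {k : ℕ} (c : V → V → ℝ)
    (hc : ∀ u v, 0 ≤ c u v) (q : Fin k → V) (hq : Function.Injective q)
    (x : Fin k → ℝ) :
    (∃ f, IsExtFlow c f q x) ↔
      ((∑ i, x i) = 0 ∧
        ∀ S : Finset (Fin k), S.Nonempty → S ≠ Finset.univ →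
          ∑ i ∈ S, x i ≤ minCut c (S.image q) (Sᶜ.image q)) := by
  have hc' : 0 ≤ c := fun u v => hc u v
  calc (∃ f, IsExtFlow c f q x)
      ↔ ∃ f ∈ Set.Icc 0 c, netOut f = supply q x := by simp only [isExtFlow_iff hq]
    _ ↔ ∑ v, supply q x v = 0 ∧ ∀ A : Finset V, ∑ v ∈ A, supply q x v ≤ cutCap c A :=
      exists_flow_iff hc' _
    _ ↔ _ := by
      rw [sum_supply_of_mem_iff x (A := univ) (S := univ) (by simp)]
      exact and_congr_right fun hx => (forall_le_minCut_iff hc' hq hx).symm
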